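/- For every T > 0 and every c > 0 one has the identity ∫₀^∞ c^s μ(T, s, 0) ds = ∫₀^∞ T^s μ(c·s, 0, 0) / Γ(s+1) ds (both integrals being equal as extended nonnegative quantities). -/

import Mathlib

/-!
Unfolding `μ`, both sides are iterated integrals over `(0,∞)²` of the same nonnegative kernel
`c^s T^u u^s / (Γ(s+1) Γ(u+1))`, taken in the two orders, so Tonelli's theorem identifies them.
The analytic input is that the inner integrals defining `μ` converge (otherwise the Bochner
integral is `0` while the lower Lebesgue integral is `∞`): from `Γ(u+1) ≥ (2a)^u e^{-2a}` one gets
`a^u u^b / Γ(u+1) ≤ e^{2a} u^b 2^{-u}`.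
-/

open MeasureTheory

/-- The Volterra `μ`-functions: `μ(t,β,δ) = ∫₀^∞ t^(δ+s) s^β / (Γ(β+1) Γ(δ+s+1)) ds`. -/
noncomputable def volterraMu (t β δ : ℝ) : ℝ :=
  ∫ s in Set.Ioi (0 : ℝ), t ^ (δ + s) * s ^ β / (Real.Gamma (β + 1) * Real.Gamma (δ + s + 1))

open Set Real

-- `Gamma` has poles, but `1 / Gamma` is entire.
@[fun_prop]
theorem Real.measurable_Gamma : Measurable Gamma := by
  have h : Measurable fun s : ℝ => (Complex.Gamma s)⁻¹ :=
    (Complex.differentiable_one_div_Gamma.continuous.comp Complex.continuous_ofReal).measurable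
  convert Complex.measurable_re.comp h.inv using 1
  ext s
  simp [Complex.Gamma_ofReal]

theorem Real.rpow_mul_exp_neg_le_Gamma_add_one {x u : ℝ} (hx : 0 ≤ x) (hu : 0 ≤ u) :
    x ^ u * exp (-x) ≤ Gamma (u + 1) := by
  have hint : IntegrableOn (fun t => exp (-t) * t ^ u) (Ioi 0) := by
    simpa using GammaIntegral_convergent (s := u + 1) (by linarith)
  rw [Gamma_eq_integral (by linarith), add_sub_cancel_right]
  calc x ^ u * exp (-x) = ∫ t in Ioi x, x ^ u * exp (-t) := by
        rw [integral_const_mul, integral_exp_neg_Ioi]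
    _ ≤ ∫ t in Ioi x, exp (-t) * t ^ u := by
        refine setIntegral_mono_on ((integrableOn_exp_neg_Ioi x).const_mul _)
          (hint.mono_set (Ioi_subset_Ioi hx)) measurableSet_Ioi fun t ht => ?_
        rw [mul_comm]
        gcongr
        exact (mem_Ioi.mp ht).le
    _ ≤ ∫ t in Ioi 0, exp (-t) * t ^ u :=
        setIntegral_mono_set hint
          ((ae_restrict_iff' measurableSet_Ioi).mpr (Filter.Eventually.of_forall
            fun t (ht : 0 < t) => by positivity))
          (Ioi_subset_Ioi hx).eventuallyLE

theorem integrableOn_rpow_mul_rpow_div_Gamma_add_one {a b : ℝ} (ha : 0 ≤ a) (hb : -1 < b) :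
    IntegrableOn (fun u => a ^ u * u ^ b / Gamma (u + 1)) (Ioi 0) := by
  have hdom : IntegrableOn (fun u => exp (2 * a) * (u ^ b * exp (-log 2 * u))) (Ioi 0) := by
    simpa only [rpow_one, IntegrableOn] using
      (integrableOn_rpow_mul_exp_neg_mul_rpow hb one_pos (log_pos one_lt_two)).const_mul _
  refine hdom.mono' (by fun_prop : Measurable _).aestronglyMeasurable
    ((ae_restrict_iff' measurableSet_Ioi).mpr (Filter.Eventually.of_forall fun u (hu : 0 < u) => ?_))
  have hΓ : 0 < Gamma (u + 1) := by positivity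
  have hbound := rpow_mul_exp_neg_le_Gamma_add_one (mul_nonneg two_pos.le ha) hu.le
  have h2 : exp (-log 2 * u) = (2 ^ u)⁻¹ := by
    rw [neg_mul, exp_neg, rpow_def_of_pos two_pos]
  rw [norm_of_nonneg (by positivity), div_le_iff₀ hΓ]
  calc a ^ u * u ^ b
      = exp (2 * a) * (u ^ b * exp (-log 2 * u)) * ((2 * a) ^ u * exp (-(2 * a))) := by
        rw [h2, mul_rpow two_pos.le ha, exp_neg]
        field_simp
    _ ≤ exp (2 * a) * (u ^ b * exp (-log 2 * u)) * Gamma (u + 1) := by gcongr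

theorem ofReal_volterraMu_zero {t β : ℝ} (ht : 0 ≤ t) (hβ : -1 < β) :
    ENNReal.ofReal (volterraMu t β 0) =
      ∫⁻ u in Ioi 0, ENNReal.ofReal (t ^ u * u ^ β / (Gamma (β + 1) * Gamma (u + 1))) := by
  have hΓ : 0 < Gamma (β + 1) := Gamma_pos_of_pos (by linarith)
  have hint : IntegrableOn (fun u => t ^ u * u ^ β / (Gamma (β + 1) * Gamma (u + 1))) (Ioi 0) := by
    simpa only [div_mul_eq_div_div_swap, IntegrableOn] using
      (integrableOn_rpow_mul_rpow_div_Gamma_add_one ht hβ).div_const (Gamma (β + 1))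
  simp only [volterraMu, zero_add]
  exact ofReal_integral_eq_lintegral_ofReal hint ((ae_restrict_iff' measurableSet_Ioi).mpr
    (Filter.Eventually.of_forall fun u (hu : 0 < u) => by positivity))

theorem ofReal_rpow_mul_volterraMu_zero {c t s : ℝ} (hc : 0 ≤ c) (ht : 0 ≤ t) (hs : -1 < s) :
    ENNReal.ofReal (c ^ s * volterraMu t s 0) =
      ∫⁻ u in Ioi 0, ENNReal.ofReal (c ^ s * t ^ u * u ^ s / (Gamma (s + 1) * Gamma (u + 1))) := by
  rw [ENNReal.ofReal_mul (by positivity), ofReal_volterraMu_zero ht hs,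
    ← lintegral_const_mul' _ _ ENNReal.ofReal_ne_top]
  refine setLIntegral_congr_fun measurableSet_Ioi fun u _ => ?_
  rw [← ENNReal.ofReal_mul (by positivity)]
  congr 1
  ring

theorem ofReal_rpow_mul_volterraMu_mul_zero_zero {c t s : ℝ} (hc : 0 ≤ c) (ht : 0 ≤ t)
    (hs : 0 ≤ s) :
    ENNReal.ofReal (t ^ s * volterraMu (c * s) 0 0 / Gamma (s + 1)) =
      ∫⁻ u in Ioi 0, ENNReal.ofReal (c ^ u * t ^ s * s ^ u / (Gamma (u + 1) * Gamma (s + 1))) := by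
  rw [mul_div_right_comm, ENNReal.ofReal_mul (by positivity),
    ofReal_volterraMu_zero (by positivity) (by norm_num),
    ← lintegral_const_mul' _ _ ENNReal.ofReal_ne_top]
  refine setLIntegral_congr_fun measurableSet_Ioi fun u _ => ?_
  rw [← ENNReal.ofReal_mul (by positivity), mul_rpow hc hs]
  congr 1
  simp only [zero_add, Gamma_one, rpow_zero]
  ring

theorem integral_rpow_mul_volterraMu_eq (T c : ℝ) (hT : 0 < T) (hc : 0 < c) :
    ∫⁻ s in Set.Ioi (0 : ℝ), ENNReal.ofReal (c ^ s * volterraMu T s 0) =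
      ∫⁻ s in Set.Ioi (0 : ℝ),
        ENNReal.ofReal (T ^ s * volterraMu (c * s) 0 0 / Real.Gamma (s + 1)) := by
  let K : ℝ → ℝ → ENNReal := fun s u =>
    ENNReal.ofReal (c ^ s * T ^ u * u ^ s / (Gamma (s + 1) * Gamma (u + 1)))
  have hK : Measurable (Function.uncurry K) := by fun_prop
  calc ∫⁻ s in Ioi 0, ENNReal.ofReal (c ^ s * volterraMu T s 0)
      = ∫⁻ s in Ioi 0, ∫⁻ u in Ioi 0, K s u :=
        setLIntegral_congr_fun measurableSet_Ioi fun s (hs : 0 < s) =>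
          ofReal_rpow_mul_volterraMu_zero hc.le hT.le (by linarith)
    _ = ∫⁻ u in Ioi 0, ∫⁻ s in Ioi 0, K s u := lintegral_lintegral_swap hK.aemeasurable
    _ = ∫⁻ s in Ioi 0, ENNReal.ofReal (T ^ s * volterraMu (c * s) 0 0 / Gamma (s + 1)) :=
        (setLIntegral_congr_fun measurableSet_Ioi fun s (hs : 0 < s) =>
          ofReal_rpow_mul_volterraMu_mul_zero_zero hc.le hT.le hs.le).symm
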